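/- arXiv:2311.06426 — 6 statements merged into one kernel-verified Lean document; each statement's English description precedes it below -/
import Mathlib

section
/- In the capacity-market clearing setup with marginal supplier ĝ and clearing price W_ĝ > 0: (1) every generator g with W_g < W_ĝ has capacity-market profit (W_ĝ − W_g)·K_g > 0; (2) the marginal supplier ĝ has profit W_ĝ·((Π^max − W_ĝ)/A − Σ_{g∈Ĝ} K_g) ≤ 0, where Ĝ = {g : W_g ≤ W_ĝ}; (3) every generator g with W_g > W_ĝ has profit −W_g·K_g < 0. -/
open Finset

/-- Theorem 1: profits of generators in the cleared capacity market.
(1) allocated non-marginal generators earn `(W_ghat − W_g)·K_g > 0`;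
(2) the marginal supplier earns `W_ghat·((Π^max − W_ghat)/A − Σ_{g∈Ghat} K_g) ≤ 0`;
(3) unallocated generators earn `−W_g·K_g < 0`. -/
theorem stmt2 {G : Type*} [Fintype G] [DecidableEq G]
    (A Pimax : ℝ) (hA : 0 < A)
    (W K : G → ℝ) (hW : ∀ g, 0 ≤ W g) (hinj : Function.Injective W)
    (hK : ∀ g, 0 < K g)
    (ghat : G) (hpos : 0 < W ghat)
    (hclear₁ : ∑ i ∈ univ.filter (fun i => W i < W ghat), K i < (Pimax - W ghat) / A)
    (hclear₂ : (Pimax - W ghat) / A ≤ ∑ i ∈ univ.filter (fun i => W i ≤ W ghat), K i)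
    (sold : G → ℝ)
    (hsold : ∀ g, sold g =
      if W g < W ghat then K g
      else if g = ghat then (Pimax - W ghat) / A - ∑ i ∈ univ.filter (fun i => W i < W ghat), K i
      else 0)
    (profit : G → ℝ)
    (hprofit : ∀ g, profit g = W ghat * sold g - W g * K g) :
    (∀ g, W g < W ghat → profit g = (W ghat - W g) * K g ∧ 0 < profit g) ∧
    (profit ghat = W ghat * ((Pimax - W ghat) / A - ∑ g ∈ univ.filter (fun g => W g ≤ W ghat), K g) ∧
      profit ghat ≤ 0) ∧
    (∀ g, W ghat < W g → profit g = -(W g * K g) ∧ profit g < 0) := by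
  have hset : univ.filter (fun g => W g ≤ W ghat)
      = insert ghat (univ.filter (fun g => W g < W ghat)) := by
    ext g
    simp only [mem_filter, mem_univ, true_and, mem_insert]
    constructor
    · intro h
      rcases lt_or_eq_of_le h with h | h
      · exact Or.inr h
      · exact Or.inl (hinj h)
    · rintro (rfl | h)
      · exact le_refl _
      · exact le_of_lt h
  have hnm : ghat ∉ univ.filter (fun g => W g < W ghat) := by
    simp
  have hsum : ∑ g ∈ univ.filter (fun g => W g ≤ W ghat), K g
      = K ghat + ∑ g ∈ univ.filter (fun g => W g < W ghat), K g := by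
    rw [hset, sum_insert hnm]
  refine ⟨?_, ⟨?_, ?_⟩, ?_⟩
  · intro g hg
    have h1 : profit g = (W ghat - W g) * K g := by
      rw [hprofit, hsold, if_pos hg]; ring
    exact ⟨h1, by rw [h1]; exact mul_pos (by linarith) (hK g)⟩
  · rw [hprofit, hsold, if_neg (lt_irrefl _), if_pos rfl, hsum]; ring
  · have h1 : profit ghat = W ghat * ((Pimax - W ghat) / A - ∑ g ∈ univ.filter (fun g => W g ≤ W ghat), K g) := by
      rw [hprofit, hsold, if_neg (lt_irrefl _), if_pos rfl, hsum]; ring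
    rw [h1]
    exact mul_nonpos_of_nonneg_of_nonpos (le_of_lt hpos) (by linarith)
  · intro g hg
    have hne : g ≠ ghat := fun h => by rw [h] at hg; exact lt_irrefl _ hg
    have h1 : profit g = -(W g * K g) := by
      rw [hprofit, hsold, if_neg (not_lt.mpr (le_of_lt hg)), if_neg hne]; ring
    exact ⟨h1, by rw [h1]; simpa using mul_pos (lt_trans hpos hg) (hK g)⟩
end

section
/- Let the peaker be a generator p with W_p = C^CONE = max_{g∈𝒢} W_g > 0, and assume Σ_{g∈𝒢} K_g ≥ Q^CAP, where the demand curve parameters satisfy A = C^CONE/(F^E·Q^CAP) and Π^max = ((1+F^E)/F^E)·C^CONE with F^E, Q^CAP > 0. If the peaker is the marginal supplier, its capacity-market profit is zero if and only if Q^CAP = Σ_{g∈𝒢} K_g, and is strictly negative when Q^CAP < Σ_{g∈𝒢} K_g. If the peaker is not the marginal supplier, it is unallocated and its profit equals −C^CONE·K_p < 0. -/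
open Finset

/-- Corollary 1: the peaker (the generator with the largest net CONE) is
revenue balanced only if it is the marginal supplier and
`Q^CAP = Σ_g K_g`; otherwise it operates at a loss. -/
theorem stmt3 {G : Type*} [Fintype G] [DecidableEq G]
    (FE QCAP CCONE A Pimax : ℝ) (hFE : 0 < FE) (hQCAP : 0 < QCAP) (hCpos : 0 < CCONE)
    (W K : G → ℝ) (hW : ∀ g, 0 ≤ W g) (hinj : Function.Injective W) (hK : ∀ g, 0 < K g)
    (p : G) (hCp : W p = CCONE) (hmax : ∀ g, W g ≤ W p)
    (hA : A = CCONE / (FE * QCAP)) (hPi : Pimax = ((1 + FE) / FE) * CCONE)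
    (hcap : QCAP ≤ ∑ g, K g)
    (ghat : G)
    (hclear₁ : ∑ i ∈ univ.filter (fun i => W i < W ghat), K i < (Pimax - W ghat) / A)
    (hclear₂ : (Pimax - W ghat) / A ≤ ∑ i ∈ univ.filter (fun i => W i ≤ W ghat), K i)
    (sold : G → ℝ)
    (hsold : ∀ g, sold g =
      if W g < W ghat then K g
      else if g = ghat then (Pimax - W ghat) / A - ∑ i ∈ univ.filter (fun i => W i < W ghat), K i
      else 0)
    (profit : G → ℝ)
    (hprofit : ∀ g, profit g = W ghat * sold g - W g * K g) :
    (ghat = p →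
      (profit p = 0 ↔ QCAP = ∑ g, K g) ∧
      (QCAP < ∑ g, K g → profit p < 0)) ∧
    (ghat ≠ p →
      sold p = 0 ∧ profit p = -(CCONE * K p) ∧ profit p < 0) := by
  have key : (Pimax - CCONE) / A = QCAP := by
    rw [hA, hPi]
    field_simp
    ring
  constructor
  · intro hgp
    subst hgp
    rw [hCp] at hclear₁ hclear₂
    have hfilt : (univ.filter (fun i => W i < W ghat)) = univ.erase ghat := by
      ext i
      simp only [mem_filter, mem_univ, true_and, mem_erase, and_true]
      constructor
      · rintro h rfl; exact lt_irrefl _ h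
      · intro h; exact lt_of_le_of_ne (hmax i) (fun he => h (hinj he))
    have hsum : ∑ i ∈ univ.filter (fun i => W i < W ghat), K i = (∑ g, K g) - K ghat := by
      rw [hfilt, Finset.sum_erase_eq_sub (mem_univ ghat)]
    have hsp : sold ghat = QCAP - ((∑ g, K g) - K ghat) := by
      rw [hsold, if_neg (lt_irrefl _), if_pos rfl, hsum, hCp, key]
    have hpr : profit ghat = CCONE * (QCAP - ∑ g, K g) := by
      rw [hprofit, hsp, hCp]; ring
    constructor
    · rw [hpr]
      constructor
      · intro h
        rcases mul_eq_zero.mp h with h | h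
        · exact absurd h hCpos.ne'
        · linarith
      · intro h; rw [h]; ring
    · intro h
      rw [hpr]
      exact mul_neg_of_pos_of_neg hCpos (by linarith)
  · intro hne
    have hlt : W ghat < W p := lt_of_le_of_ne (hmax ghat) (fun he => hne (hinj he))
    have hs : sold p = 0 := by
      rw [hsold, if_neg (not_lt.mpr hlt.le), if_neg (fun he => hne he.symm)]
    have hp : profit p = -(CCONE * K p) := by
      rw [hprofit, hs, hCp]; ring
    exact ⟨hs, hp, by rw [hp]; exact neg_neg_of_pos (mul_pos hCpos (hK p))⟩
end

section
/- Suppose the leader (generator 1) is the marginal supplier under truthful bidding, i.e., W_1 = W_ĝ with allocated set Ĝ = {i : W_i ≤ W_1}, truthful sold quantity q_1 = (Π^max − W_1)/A − Σ_{i∈Ĝ\{1}} K_i > 0, and let W_ḋ = max_{i∈Ĝ\{1}} W_i and W_g̈ = min_{i∉Ĝ} W_i. Let W_ĝ' > 0 be the clearing price when the leader bids 0 (i.e., the marginal-supplier conditions hold for the bid profile w_1 = 0, w_i = W_i for i ≠ 1, with marginal supplier ĝ' ≠ 1). Then: (i) if K_1 ≥ (Π^max − W_ḋ)/A − Σ_{i∈Ĝ\{1}}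 K_i, then W_ĝ' ≤ W_ḋ, and if additionally K_1 > (W_1/W_ĝ')·((Π^max − W_1)/A − Σ_{i∈Ĝ\{1}} K_i), the leader's revenue strictly increases by bidding 0: W_ĝ'·K_1 > W_1·q_1; (ii) if K_1 < (Π^max − W_ḋ)/A − Σ_{i∈Ĝ\{1}} K_i, then W_ĝ' ≥ W_g̈ > W_1 and the leader's revenue strictly increases by bidding 0: W_ĝ'·K_1 > W_1·q_1. -/
open Finset

/-- Lemma 1(2): if the leader is the marginal supplier under truthful bidding,
conditions on its qualified capacity under which bidding 0 strictly increases
its revenue, together with the location of the new clearing price. -/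
theorem stmt12 {G : Type*} [Fintype G] [DecidableEq G]
    (A Pimax : ℝ) (hA : 0 < A)
    (W K : G → ℝ) (hW : ∀ g, 0 ≤ W g) (hinj : Function.Injective W) (hK : ∀ g, 0 < K g)
    (one d g2 ghat' : G)
    -- the leader (generator `one`) is the marginal supplier under truthful bidding
    (hclear₁ : ∑ i ∈ univ.filter (fun i => W i < W one), K i < (Pimax - W one) / A)
    (hclear₂ : (Pimax - W one) / A ≤ ∑ i ∈ univ.filter (fun i => W i ≤ W one), K i)
    (q1 : ℝ)
    (hq1 : q1 = (Pimax - W one) / A - ∑ i ∈ univ.filter (fun i => W i < W one), K i)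
    (hq1pos : 0 < q1)
    -- `d` = most expensive allocated generator other than the leader (W_ḋ)
    (hd₁ : W d < W one) (hd₂ : ∀ i, W i < W one → W i ≤ W d)
    -- `g2` = least expensive unallocated generator (W_g̈)
    (hg2₁ : W one < W g2) (hg2₂ : ∀ i, W one < W i → W g2 ≤ W i)
    -- when the leader bids 0, the market clears at generator `ghat'` with price `W ghat' > 0`
    (w' : G → ℝ) (hw' : w' = Function.update W one 0)
    (hghat'ne : ghat' ≠ one) (hghat'pos : 0 < W ghat')
    (hclear₁' : ∑ i ∈ univ.filter (fun i => w' i < w' ghat'), K i < (Pimax - w' ghat') / A)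
    (hclear₂' : (Pimax - w' ghat') / A ≤ ∑ i ∈ univ.filter (fun i => w' i ≤ w' ghat'), K i) :
    ((Pimax - W d) / A - (∑ i ∈ univ.filter (fun i => W i < W one), K i) ≤ K one →
      W ghat' ≤ W d ∧
      ((W one / W ghat') * q1 < K one → W one * q1 < W ghat' * K one)) ∧
    (K one < (Pimax - W d) / A - (∑ i ∈ univ.filter (fun i => W i < W one), K i) →
      W g2 ≤ W ghat' ∧ W one < W g2 ∧ W one * q1 < W ghat' * K one) := by
  subst hw'
  have hupd : ∀ i, i ≠ one → Function.update W one 0 i = W i :=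
    fun i hi => Function.update_of_ne hi _ _
  have hg' : Function.update W one 0 ghat' = W ghat' := hupd _ hghat'ne
  have hone0 : Function.update W one 0 one = (0 : ℝ) := Function.update_self _ _ _
  have honenot : one ∉ univ.filter (fun i => W i < W one) := by simp
  rw [hg'] at hclear₁' hclear₂'
  have hsum_le : ∑ i ∈ univ.filter (fun i => W i ≤ W one), K i
      = K one + ∑ i ∈ univ.filter (fun i => W i < W one), K i := by
    have hset : univ.filter (fun i => W i ≤ W one)
        = insert one (univ.filter (fun i => W i < W one)) := by
      ext i
      simp only [mem_filter, mem_insert, mem_univ, true_and]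
      constructor
      · intro h
        rcases eq_or_lt_of_le h with h | h
        · exact Or.inl (hinj h)
        · exact Or.inr h
      · rintro (rfl | h)
        · exact le_refl _
        · exact le_of_lt h
    rw [hset, Finset.sum_insert honenot]
  have hq1K : q1 ≤ K one := by
    rw [hq1]
    rw [hsum_le] at hclear₂
    linarith
  have hne_gone : W ghat' ≠ W one := fun h => hghat'ne (hinj h)
  constructor
  · intro hcap
    have hle : W ghat' ≤ W d := by
      by_contra hgt
      push_neg at hgt
      have hgo : W one < W ghat' := by
        rcases lt_or_gt_of_ne hne_gone with h | h
        · exact absurd (hd₂ _ h) (not_le.mpr hgt)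
        · exact h
      have hsub : insert one (univ.filter (fun i => W i < W one)) ⊆
          univ.filter (fun i => Function.update W one 0 i < W ghat') := by
        intro i hi
        simp only [mem_insert, mem_filter, mem_univ, true_and] at hi ⊢
        rcases hi with rfl | hi
        · rw [hone0]; exact hghat'pos
        · have hine : i ≠ one := fun h => absurd (h ▸ hi) (lt_irrefl _)
          rw [hupd i hine]; exact hi.trans hgo
      have hsum : K one + ∑ i ∈ univ.filter (fun i => W i < W one), K i ≤
          ∑ i ∈ univ.filter
            (fun i => Function.update W one 0 i < W ghat'), K i := by
        rw [← Finset.sum_insert honenot]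
        exact Finset.sum_le_sum_of_subset_of_nonneg hsub (fun i _ _ => (hK i).le)
      have hdiv : (Pimax - W ghat') / A < (Pimax - W d) / A :=
        (div_lt_div_iff_of_pos_right hA).mpr (by linarith)
      linarith
    refine ⟨hle, fun hlt => ?_⟩
    have hne0 : W ghat' ≠ 0 := ne_of_gt hghat'pos
    have h2 : W one / W ghat' * q1 * W ghat' = W one * q1 := by
      field_simp
    linarith [mul_lt_mul_of_pos_right hlt hghat'pos, mul_comm (K one) (W ghat')]
  · intro hcap
    have hgo : W one < W ghat' := by
      by_contra hle
      push_neg at hle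
      have hlt : W ghat' < W one := lt_of_le_of_ne hle hne_gone
      have hsub : univ.filter
          (fun i => Function.update W one 0 i ≤ W ghat') ⊆
          insert one (univ.filter (fun i => W i < W one)) := by
        intro i hi
        simp only [mem_filter, mem_univ, true_and] at hi
        simp only [mem_insert, mem_filter, mem_univ, true_and]
        by_cases h : i = one
        · exact Or.inl h
        · right
          rw [hupd i h] at hi
          exact lt_of_le_of_lt hi hlt
      have hsum : ∑ i ∈ univ.filter
            (fun i => Function.update W one 0 i ≤ W ghat'), K i ≤
          K one + ∑ i ∈ univ.filter (fun i => W i < W one), K i := by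
        rw [← Finset.sum_insert honenot]
        exact Finset.sum_le_sum_of_subset_of_nonneg hsub (fun i _ _ => (hK i).le)
      have hWd : W ghat' ≤ W d := hd₂ _ hlt
      have hdiv : (Pimax - W d) / A ≤ (Pimax - W ghat') / A :=
        (div_le_div_iff_of_pos_right hA).mpr (by linarith)
      linarith
    refine ⟨hg2₂ _ hgo, hg2₁, ?_⟩
    have h1 : W one * q1 ≤ W one * K one := mul_le_mul_of_nonneg_left hq1K (hW one)
    have h2 : W one * K one < W ghat' * K one := mul_lt_mul_of_pos_right hgo (hK one)
    linarith
end

section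
/- Suppose the leader (generator 1) is unallocated under truthful bidding, i.e., W_1 > W_ĝ where W_ĝ is the truthful clearing price (so the leader's truthful revenue is 0). If the leader bids 0 and the market clears at price W_ĝ' (i.e., the marginal-supplier conditions hold for the bid profile w_1 = 0, w_i = W_i for i ≠ 1, with marginal supplier ĝ' ≠ 1 and W_ĝ' > 0), then W_ĝ' ≤ W_ĝ, the leader sells its full qualified capacity K_1, and its revenue satisfies W_ĝ'·K_1 > 0, strictly more than under truthful bidding. -/
open Finset

/-- Lemma 1(3): if the leader is unallocated under truthful bidding, then
bidding 0 clears the market at a price no higher than the truthful price,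
the leader sells its full qualified capacity, and its revenue becomes
strictly positive (strictly more than its truthful revenue of 0). -/
theorem stmt13 {G : Type*} [Fintype G] [DecidableEq G]
    (A Pimax : ℝ) (hA : 0 < A)
    (W K : G → ℝ) (hW : ∀ g, 0 ≤ W g) (hinj : Function.Injective W) (hK : ∀ g, 0 < K g)
    (one ghat ghat' : G)
    (hclear₁ : ∑ i ∈ univ.filter (fun i => W i < W ghat), K i < (Pimax - W ghat) / A)
    (hclear₂ : (Pimax - W ghat) / A ≤ ∑ i ∈ univ.filter (fun i => W i ≤ W ghat), K i)
    (hghatpos : 0 < W ghat) (hlead : W ghat < W one)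
    (w' : G → ℝ) (hw' : w' = Function.update W one 0)
    (hghat'ne : ghat' ≠ one) (hghat'pos : 0 < W ghat')
    (hclear₁' : ∑ i ∈ univ.filter (fun i => w' i < w' ghat'), K i < (Pimax - w' ghat') / A)
    (hclear₂' : (Pimax - w' ghat') / A ≤ ∑ i ∈ univ.filter (fun i => w' i ≤ w' ghat'), K i)
    (sold : (G → ℝ) → G → G → ℝ)
    (hsold : ∀ w m g, sold w m g =
      if w g < w m then K g
      else if g = m then (Pimax - w m) / A - ∑ i ∈ univ.filter (fun i => w i < w m), K i
      else 0) :
    W ghat' ≤ W ghat ∧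
    sold w' ghat' one = K one ∧
    0 < W ghat' * K one := by
  subst hw'
  have hwg' : Function.update W one 0 ghat' = W ghat' := Function.update_of_ne hghat'ne 0 W
  rw [hwg'] at hclear₁'
  refine ⟨?_, ?_, mul_pos hghat'pos (hK one)⟩
  · by_contra hgt
    push_neg at hgt
    have hsub : (univ.filter (fun i => W i ≤ W ghat)) ⊆
        univ.filter (fun i => Function.update W one 0 i < Function.update W one 0 ghat') := by
      intro i hi
      simp only [mem_filter, mem_univ, true_and] at hi ⊢
      rw [hwg']
      by_cases h : i = one
      · subst h; rw [Function.update_self]; exact hghat'pos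
      · rw [Function.update_of_ne h]; exact lt_of_le_of_lt hi hgt
    have hsum := Finset.sum_le_sum_of_subset_of_nonneg hsub (fun i _ _ => (hK i).le)
    have hdiv : (Pimax - W ghat') / A < (Pimax - W ghat) / A :=
      (div_lt_div_iff_of_pos_right hA).mpr (by linarith)
    simp only [hwg'] at hsum
    linarith
  · rw [hsold, if_pos]
    rw [hwg', Function.update_self]
    exact hghat'pos
end

section
/- Suppose the leader (generator 1) is allocated and non-marginal under truthful bidding (W_1 < W_ĝ, where W_ĝ > 0 is the truthful clearing price), so its truthful revenue is W_ĝ·K_1. Let Ĝ'' ⊆ 𝒢 with 1 ∈ Ĝ'', set S = Σ_{i∈Ĝ''\{1}} K_i, B = (Π^max − A·S)/2, q''(w) = (Π^max − w)/A − S, and W_g̈'' = min_{i∉Ĝ''} W_i; call a bid w > 0 marginal-valid for Ĝ'' if W_i < w for all i ∈ Ĝ''\{1}, w < W_i for all i ∉ Ĝ'', and 0 < q''(w) ≤ K_1 (so bidding w makes the leader the marginal supplier with allocated set Ĝ'', sold quantity q''(w), and revenue w·q''(w)). If B > W_ĝ and either (i) B < W_g̈'', B² > A·W_ĝ·K_1,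 and the bid B is marginal-valid for Ĝ'', or (ii) W_g̈''·q''(W_g̈'') > W_ĝ·K_1 and there exists δ > 0 such that every bid in (W_g̈'' − δ, W_g̈'') is marginal-valid for Ĝ'', then there exists a bid w ≠ W_1 that is marginal-valid for Ĝ'' with revenue w·q''(w) > W_ĝ·K_1, i.e., the leader strictly increases its revenue by deviating from its truthful bid and becoming the marginal supplier. -/
open Finset

/-- Proposition 6: if the leader is allocated and non-marginal under truthful
bidding, then under either condition (i) or (ii) there exists a bid
`w ≠ W_1`, marginal-valid for `Ghat''`, whose revenue `w·q''(w)` strictly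
exceeds the truthful revenue `W_ghat·K_1`. -/
theorem stmt14 {G : Type*} [Fintype G] [DecidableEq G]
    (A Pimax : ℝ) (hA : 0 < A)
    (W K : G → ℝ) (hW : ∀ g, 0 ≤ W g) (hinj : Function.Injective W) (hK : ∀ g, 0 < K g)
    (one ghat : G) (hghatpos : 0 < W ghat) (hlead : W one < W ghat)
    (hclear₁ : ∑ i ∈ univ.filter (fun i => W i < W ghat), K i < (Pimax - W ghat) / A)
    (hclear₂ : (Pimax - W ghat) / A ≤ ∑ i ∈ univ.filter (fun i => W i ≤ W ghat), K i)
    (Ghat : Finset G) (hone : one ∈ Ghat)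
    (S : ℝ) (hS : S = ∑ i ∈ Ghat.erase one, K i)
    (B : ℝ) (hB : B = (Pimax - A * S) / 2)
    (q : ℝ → ℝ) (hq : ∀ w, q w = (Pimax - w) / A - S)
    (g2 : G) (hg2mem : g2 ∉ Ghat) (hg2min : ∀ i, i ∉ Ghat → W g2 ≤ W i)
    (MV : ℝ → Prop)
    (hMV : ∀ w, MV w ↔
      (0 < w ∧ (∀ i ∈ Ghat.erase one, W i < w) ∧ (∀ i, i ∉ Ghat → w < W i) ∧
       0 < q w ∧ q w ≤ K one))
    (hBghat : W ghat < B)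
    (hcase :
      (B < W g2 ∧ A * (W ghat * K one) < B ^ 2 ∧ MV B) ∨
      (W ghat * K one < W g2 * q (W g2) ∧
        ∃ δ > 0, ∀ w, W g2 - δ < w → w < W g2 → MV w)) :
    ∃ w, w ≠ W one ∧ MV w ∧ W ghat * K one < w * q w := by

  rcases hcase with ⟨hBg2, hB2, hMVB⟩ | ⟨hrev, δ, hδ, hδMV⟩
  · refine ⟨B, ?_, hMVB, ?_⟩
    · intro h; rw [h] at hBghat; linarith
    · have hqB : q B = B / A := by
        rw [hq, hB]; field_simp; ring
      rw [hqB]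
      rw [← mul_div_assoc, lt_div_iff₀ hA]
      nlinarith
  · have hfc : Continuous fun w => w * q w := by
      have h : (fun w => w * q w) = fun w => w * ((Pimax - w) / A - S) := by
        funext w; rw [hq]
      rw [h]; continuity
    have hopen : IsOpen {w | W ghat * K one < w * q w} :=
      isOpen_lt continuous_const hfc
    obtain ⟨ε, hε, hball⟩ := Metric.isOpen_iff.mp hopen _ hrev
    set η := min δ ε with hη
    have hηpos : 0 < η := lt_min hδ hε
    have key : ∀ w, W g2 - η < w → w < W g2 → MV w ∧ W ghat * K one < w * q w := by
      intro w h1 h2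
      have hd1 := min_le_left δ ε
      have hd2 := min_le_right δ ε
      refine ⟨hδMV w (by linarith) h2, hball ?_⟩
      simp only [Metric.mem_ball, Real.dist_eq, abs_lt]
      constructor <;> linarith
    by_cases hc : W g2 - η / 2 = W one
    · obtain ⟨h1, h2⟩ := key (W g2 - η / 4) (by linarith) (by linarith)
      exact ⟨_, by intro h; rw [← hc] at h; linarith, h1, h2⟩
    · obtain ⟨h1, h2⟩ := key (W g2 - η / 2) (by linarith) (by linarith)
      exact ⟨_, hc, h1, h2⟩
end

section
/- Suppose the leader (generator 1) is unallocated under truthful bidding (W_1 > W_ĝ, where W_ĝ > 0 is the truthful clearing price), so its truthful revenue is 0. Then the leader always earns strictly higher revenue by bidding untruthfully: bidding 0 yields revenue W_ĝ'·K_1 > 0, where W_ĝ' > 0 is the clearing price under the bid profile w_1 = 0, w_i = W_i (i ≠ 1). Moreover, if K_1 ≥ (Π^max − W_ĝ)/A − Σ_{i : W_i < W_ĝ} K_i, and there is a set Ĝ'' ∋ 1 with S = Σ_{i∈Ĝ''\{1}} K_i, B = (Π^max − A·S)/2 > W_ĝ', q''(w) = (Π^max − w)/A − S, W_g̈'' =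 min_{i∉Ĝ''} W_i, such that either (i) B < W_g̈'', B² > A·W_ĝ'·K_1, and the bid B is marginal-valid for Ĝ'' (W_i < B for all i ∈ Ĝ''\{1}, B < W_i for all i ∉ Ĝ'', 0 < q''(B) ≤ K_1), or (ii) W_g̈''·q''(W_g̈'') > W_ĝ'·K_1 and bids in an interval (W_g̈'' − δ, W_g̈'') are marginal-valid for Ĝ'' for some δ > 0, then there exists a marginal-valid bid w with revenue w·q''(w) > W_ĝ'·K_1, so the leader earns strictly more by becoming the marginal supplier than by bidding 0. -/
open Finset

/-- Proposition 8: an unallocated leader always earns strictly higher revenue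
by bidding untruthfully: bidding 0 yields revenue `W_ghat'·K_1 > 0`; and if its
qualified capacity is large enough and condition (i) or (ii) holds for a set
`Ghat'' ∋ 1`, there is a marginal-valid bid with revenue exceeding `W_ghat'·K_1`. -/
theorem stmt16 {G : Type*} [Fintype G] [DecidableEq G]
    (A Pimax : ℝ) (hA : 0 < A)
    (W K : G → ℝ) (hW : ∀ g, 0 ≤ W g) (hinj : Function.Injective W) (hK : ∀ g, 0 < K g)
    (one ghat ghat' : G)
    -- truthful clearing at `ghat`, with the leader unallocated
    (hclear₁ : ∑ i ∈ univ.filter (fun i => W i < W ghat), K i < (Pimax - W ghat) / A)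
    (hclear₂ : (Pimax - W ghat) / A ≤ ∑ i ∈ univ.filter (fun i => W i ≤ W ghat), K i)
    (hghatpos : 0 < W ghat) (hlead : W ghat < W one)
    -- when the leader bids 0, the market clears at `ghat'` with price `W ghat' > 0`
    (w' : G → ℝ) (hw' : w' = Function.update W one 0)
    (hghat'ne : ghat' ≠ one) (hghat'pos : 0 < W ghat')
    (hclear₁' : ∑ i ∈ univ.filter (fun i => w' i < w' ghat'), K i < (Pimax - w' ghat') / A)
    (hclear₂' : (Pimax - w' ghat') / A ≤ ∑ i ∈ univ.filter (fun i => w' i ≤ w' ghat'), K i) :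
    0 < W ghat' * K one ∧
    ((Pimax - W ghat) / A - (∑ i ∈ univ.filter (fun i => W i < W ghat), K i) ≤ K one →
      ∀ (Ghat : Finset G), one ∈ Ghat →
      ∀ S B : ℝ, S = ∑ i ∈ Ghat.erase one, K i → B = (Pimax - A * S) / 2 →
      ∀ q : ℝ → ℝ, (∀ w, q w = (Pimax - w) / A - S) →
      ∀ g2 : G, g2 ∉ Ghat → (∀ i, i ∉ Ghat → W g2 ≤ W i) →
      ∀ MV : ℝ → Prop,
        (∀ w, MV w ↔
          (0 < w ∧ (∀ i ∈ Ghat.erase one, W i < w) ∧ (∀ i, i ∉ Ghat → w < W i) ∧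
           0 < q w ∧ q w ≤ K one)) →
        W ghat' < B →
        ((B < W g2 ∧ A * (W ghat' * K one) < B ^ 2 ∧ MV B) ∨
          (W ghat' * K one < W g2 * q (W g2) ∧
            ∃ δ > 0, ∀ w, W g2 - δ < w → w < W g2 → MV w)) →
        ∃ w, MV w ∧ W ghat' * K one < w * q w) := by
  constructor
  · exact mul_pos hghat'pos (hK one)
  · intro hKbig Ghat hone S B hS hB q hq g2 hg2 hg2min MV hMV hB' hcase
    rcases hcase with ⟨h1, h2, h3⟩ | ⟨h1, δ, hδ, h2⟩
    · refine ⟨B, h3, ?_⟩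
      have hqB : q B = B / A := by
        rw [hq, hB]; field_simp; ring
      rw [hqB]
      have hBB : B * (B / A) = B ^ 2 / A := by ring
      rw [hBB, lt_div_iff₀ hA]
      nlinarith
    · set c := W ghat' * K one with hc
      have hcont : ContinuousAt (fun w => w * ((Pimax - w) / A - S)) (W g2) := by
        fun_prop
      have hfc : c < W g2 * ((Pimax - W g2) / A - S) := by rw [hq] at h1; exact h1
      have hev := hcont.eventually (eventually_gt_nhds hfc)
      rw [Metric.eventually_nhds_iff] at hev
      obtain ⟨ε, hε, hball⟩ := hev
      set w := W g2 - min δ ε / 2 with hw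
      have hmin : 0 < min δ ε := lt_min hδ hε
      have hml := min_le_left δ ε
      have hmr := min_le_right δ ε
      have hw1 : W g2 - δ < w := by rw [hw]; linarith
      have hw2 : w < W g2 := by rw [hw]; linarith
      refine ⟨w, h2 w hw1 hw2, ?_⟩
      have hd : dist w (W g2) < ε := by
        rw [Real.dist_eq, abs_sub_lt_iff]
        constructor <;> rw [hw] <;> linarith
      have := hball hd
      rw [hq]; exact this
end
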